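/- arXiv:1011.2017 — 3 statements merged into one kernel-verified Lean document; each statement's English description precedes it below -/
import Mathlib

section
/- The map φ(z) = z e^{1−z} restricted to the closed unit disk is injective; in particular φ maps the region G_r = Int(Γ_r) conformally onto the open disk of radius e^{−r} centered at 0 (for 0 ≤ r < ∞). -/
/-!
Write `a = m + d`, `b = m - d`. Then `φ a - φ b = 2 e^{1-m} (d cosh d - m sinh d)`, so
`φ a = φ b` forces `|d|² |cosh d|² = |m|² |sinh d|²`. For `a, b` in the closed disk the
parallelogram law gives `|m|² ≤ 1 - |d|²`, whereas for `d = x + iy` the identities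
`|sinh d|² = sinh² x + sin² y`, `|cosh d|² = sinh² x + cos² y` together with
`|sinh x| ≤ |x| cosh x` and `|sin y| ≤ |y|` give `(1 - |d|²) |sinh d|² < |d|² |cosh d|²`
for `d ≠ 0`.

For the image: `φ` is a nonconstant entire function, hence an open map, and `|φ| ≥ 1` on the
unit circle. So the image of the open unit disk is open and relatively closed in the open unit
disk, which is connected, and therefore contains it.
-/

open Metric Set

namespace Real

theorem abs_sinh_le_abs_mul_cosh (x : ℝ) : |sinh x| ≤ |x| * cosh x := by
  have := (convex_closedBall (0 : ℝ) |x|).norm_image_sub_le_of_norm_hasDerivWithin_le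
    (fun t _ => (hasDerivAt_sinh t).hasDerivWithinAt)
    (fun t ht => by
      rw [norm_eq_abs, abs_of_pos (cosh_pos t), cosh_le_cosh]
      simpa using ht)
    (mem_closedBall_self (abs_nonneg x)) (show x ∈ closedBall 0 |x| by simp)
  simpa [mul_comm] using this

theorem sinh_sq_le_sq_mul_one_add_sinh_sq (x : ℝ) : sinh x ^ 2 ≤ x ^ 2 * (1 + sinh x ^ 2) := by
  have := pow_le_pow_left₀ (abs_nonneg _) (abs_sinh_le_abs_mul_cosh x) 2
  rwa [sq_abs, mul_pow, sq_abs, cosh_sq, add_comm] at this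

end Real

namespace Complex

theorem sinh_eq_re_add_im_mul_I (z : ℂ) :
    sinh z = ↑(Real.sinh z.re * Real.cos z.im) + ↑(Real.cosh z.re * Real.sin z.im) * I := by
  conv_lhs => rw [← re_add_im z]
  rw [sinh_add, sinh_mul_I, cosh_mul_I]
  push_cast
  ring

theorem cosh_eq_re_add_im_mul_I (z : ℂ) :
    cosh z = ↑(Real.cosh z.re * Real.cos z.im) + ↑(Real.sinh z.re * Real.sin z.im) * I := by
  conv_lhs => rw [← re_add_im z]
  rw [cosh_add, sinh_mul_I, cosh_mul_I]
  push_cast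
  ring

theorem normSq_sinh (z : ℂ) : normSq (sinh z) = Real.sinh z.re ^ 2 + Real.sin z.im ^ 2 := by
  rw [sinh_eq_re_add_im_mul_I, normSq_add_mul_I]
  linear_combination Real.sin z.im ^ 2 * Real.cosh_sq z.re +
    Real.sinh z.re ^ 2 * Real.sin_sq_add_cos_sq z.im

theorem normSq_cosh (z : ℂ) : normSq (cosh z) = Real.sinh z.re ^ 2 + Real.cos z.im ^ 2 := by
  rw [cosh_eq_re_add_im_mul_I, normSq_add_mul_I]
  linear_combination Real.cos z.im ^ 2 * Real.cosh_sq z.re +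
    Real.sinh z.re ^ 2 * Real.sin_sq_add_cos_sq z.im

theorem one_sub_normSq_mul_normSq_sinh_lt {z : ℂ} (hz : z ≠ 0) :
    (1 - normSq z) * normSq (sinh z) < normSq z * normSq (cosh z) := by
  rw [normSq_sinh, normSq_cosh, normSq_apply, Real.cos_sq']
  have hsinh := Real.sinh_sq_le_sq_mul_one_add_sinh_sq z.re
  have hsin := Real.sin_sq_le_sq (x := z.im)
  have hy := mul_nonneg (sq_nonneg z.im) (sq_nonneg (Real.sinh z.re))
  rcases eq_or_ne z.re 0 with hre | hre
  · have hsin' := Real.sin_sq_lt_sq (x := z.im) fun him => hz (ext hre him)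
    simp only [hre, Real.sinh_zero]
    nlinarith
  · have hx : 0 < z.re ^ 2 * Real.sinh z.re ^ 2 := by
      have : Real.sinh z.re ≠ 0 := by simpa using hre
      positivity
    nlinarith

end Complex

theorem ball_subset_image_ball_of_isOpen_image {X F : Type*} [PseudoMetricSpace X] [ProperSpace X]
    [NormedAddCommGroup F] [NormedSpace ℝ F] {f : X → F} {c : X} {R ρ : ℝ} {w : F}
    (hf : ContinuousOn f (closedBall c R)) (hopen : IsOpen (f '' ball c R)) (hR : 0 < R)
    (hc : f c ∈ ball w ρ) (hsphere : ∀ z ∈ sphere c R, ρ ≤ dist (f z) w) :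
    ball w ρ ⊆ f '' ball c R := by
  have hclosure : closure (f '' ball c R) ⊆ f '' closedBall c R :=
    closure_minimal (image_mono ball_subset_closedBall)
      ((isCompact_closedBall c R).image_of_continuousOn hf).isClosed
  have hrel : ball w ρ ∩ closure (f '' ball c R) ⊆ f '' ball c R := by
    rintro _ ⟨hv, hvcl⟩
    obtain ⟨z, hz, rfl⟩ := hclosure hvcl
    refine ⟨z, mem_ball.mpr (lt_of_le_of_ne (mem_closedBall.mp hz) fun hzR => ?_), rfl⟩
    exact (hsphere z hzR).not_gt hv
  refine (convex_ball w ρ).isPreconnected.subset_left_of_subset_union hopen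
    isClosed_closure.isOpen_compl (disjoint_compl_right.mono_left subset_closure)
    (fun v hv => ?_) ⟨f c, hc, c, mem_ball_self hR, rfl⟩
  by_cases hvcl : v ∈ closure (f '' ball c R)
  · exact Or.inl (hrel ⟨hv, hvcl⟩)
  · exact Or.inr hvcl

noncomputable def phi (z : ℂ) : ℂ := z * Complex.exp (1 - z)

theorem phi_add_sub_phi_sub (m d : ℂ) :
    phi (m + d) - phi (m - d) =
      2 * Complex.exp (1 - m) * (d * Complex.cosh d - m * Complex.sinh d) := by
  have hplus : Complex.exp (1 - (m + d)) = Complex.exp (1 - m) * Complex.exp (-d) := by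
    rw [← Complex.exp_add]; ring_nf
  have hminus : Complex.exp (1 - (m - d)) = Complex.exp (1 - m) * Complex.exp d := by
    rw [← Complex.exp_add]; ring_nf
  rw [phi, phi, hplus, hminus, Complex.cosh, Complex.sinh]
  ring

theorem injOn_phi_closedBall : InjOn phi (closedBall 0 1) := by
  intro a ha b hb hab
  obtain ⟨m, d, rfl, rfl⟩ : ∃ m d : ℂ, a = m + d ∧ b = m - d :=
    ⟨(a + b) / 2, (a - b) / 2, by ring, by ring⟩
  by_contra hne
  have hd : d ≠ 0 := by rintro rfl; simp at hne
  have hkey : d * Complex.cosh d = m * Complex.sinh d := by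
    have := phi_add_sub_phi_sub m d
    rw [hab, sub_self, eq_comm] at this
    simpa [Complex.exp_ne_zero, sub_eq_zero] using this
  have hnorm : Complex.normSq d * Complex.normSq (Complex.cosh d) =
      Complex.normSq m * Complex.normSq (Complex.sinh d) := by
    rw [← map_mul, hkey, map_mul]
  have hpar : Complex.normSq m ≤ 1 - Complex.normSq d := by
    have := parallelogram_law_with_norm ℝ m d
    rw [mem_closedBall_zero_iff] at ha hb
    simp only [← Complex.sq_norm]
    nlinarith [norm_nonneg (m + d), norm_nonneg (m - d)]
  nlinarith [Complex.one_sub_normSq_mul_normSq_sinh_lt hd, Complex.normSq_nonneg (Complex.sinh d)]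

theorem differentiable_phi : Differentiable ℂ phi := by
  unfold phi
  fun_prop

theorem isOpenMap_phi : IsOpenMap phi := by
  rcases (differentiable_phi.differentiableOn.analyticOnNhd isOpen_univ).is_constant_or_isOpen
    isPreconnected_univ with ⟨c, hc⟩ | hopen
  · have : phi 0 = phi 1 := (hc 0 trivial).trans (hc 1 trivial).symm
    norm_num [phi] at this
  · exact fun U hU => hopen U (subset_univ U) hU

theorem norm_phi (z : ℂ) : ‖phi z‖ = ‖z‖ * Real.exp (1 - z.re) := by
  simp [phi, Complex.norm_exp]

theorem one_le_norm_phi_of_mem_sphere {z : ℂ} (hz : z ∈ sphere 0 1) : 1 ≤ ‖phi z‖ := by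
  rw [mem_sphere_zero_iff_norm] at hz
  rw [norm_phi, hz, one_mul, Real.one_le_exp_iff, sub_nonneg]
  exact (Complex.re_le_norm z).trans hz.le

theorem ball_subset_image_phi_ball : ball 0 1 ⊆ phi '' ball 0 1 :=
  ball_subset_image_ball_of_isOpen_image differentiable_phi.continuous.continuousOn
    (isOpenMap_phi _ isOpen_ball) one_pos
    (by simp [phi]) fun z hz => by simpa using one_le_norm_phi_of_mem_sphere hz

/-- `φ(z) = z e^{1−z}` is injective on the closed unit disk; in particular, for every
`0 ≤ r`, `φ` maps the interior region `G_r = { z : |z| < 1, |φ(z)| < e^{−r} }`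
(conformally, `φ` being holomorphic and injective) onto the open disk `|w| < e^{−r}`. -/
theorem phi_injective_and_maps_onto_disk :
    Set.InjOn (fun z : ℂ => z * Complex.exp (1 - z)) (Metric.closedBall (0 : ℂ) 1) ∧
      ∀ r : ℝ, 0 ≤ r →
        (fun z : ℂ => z * Complex.exp (1 - z)) ''
            {z : ℂ | ‖z‖ < 1 ∧
              ‖z * Complex.exp (1 - z)‖ < Real.exp (-r)} =
          Metric.ball (0 : ℂ) (Real.exp (-r)) := by
  refine ⟨injOn_phi_closedBall, fun r hr => ?_⟩
  have hsub : ball (0 : ℂ) (Real.exp (-r)) ⊆ phi '' ball 0 1 :=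
    (ball_subset_ball (Real.exp_le_one_iff.mpr (neg_nonpos.mpr hr))).trans
      ball_subset_image_phi_ball
  have hset : {z : ℂ | ‖z‖ < 1 ∧ ‖phi z‖ < Real.exp (-r)} =
      ball 0 1 ∩ phi ⁻¹' ball 0 (Real.exp (-r)) := by
    ext z
    simp only [mem_ofPred_eq, mem_inter_iff, mem_preimage, mem_ball_zero_iff]
  change phi '' {z : ℂ | ‖z‖ < 1 ∧ ‖phi z‖ < Real.exp (-r)} = _
  rw [hset, image_inter_preimage, inter_eq_right.mpr hsub]
end

section
/- Let (α_n) be a sequence of real numbers with α_n ∉ 𝕊_n := {−n, …, −1}, and let h_n ∈ {1, …, n} attain dist(α_n, 𝕊_n) = |α_n + h_n|. If α_n ≥ −n − 1/2, then for every integer k ≥ 1 appearing in the factorization one has (2k−1)/2 ≤ |α_n + h_n ± k| ≤ (2k+1)/2, and consequently ∏_{k=1}^{h_n−1} (2k−1)/2 · ∏_{k=1}^{n−h_n} (2k−1)/2 ≤ |(n+α_n)(n+α_n−1)⋯(1+α_n)| / |α_n + h_n| ≤ ∏_{k=1}^{h_n−1} (2k+1)/2 · ∏_{k=1}^{n−h_n}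 (2k+1)/2. -/
open Finset

/-- Let `α ∉ 𝕊_n = {−n,…,−1}` and `h ∈ {1,…,n}` attain `dist(α, 𝕊_n) = |α + h|`
(so that `|α + h| ≤ 1/2` when `α ≥ −n − 1/2`). Then every other factor satisfies
`(2k−1)/2 ≤ |α + h ± k| ≤ (2k+1)/2`, and consequently
`∏_{k=1}^{h−1}(2k−1)/2 · ∏_{k=1}^{n−h}(2k−1)/2 ≤ |(n+α)⋯(1+α)|/|α+h|
  ≤ ∏_{k=1}^{h−1}(2k+1)/2 · ∏_{k=1}^{n−h}(2k+1)/2`. -/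
theorem factor_bounds_near_integer (n : ℕ) (hn : 1 ≤ n) (α : ℝ) (h : ℕ)
    (hh : h ∈ Finset.Icc 1 n)
    (hS : ∀ j ∈ Finset.Icc 1 n, α + j ≠ 0)
    (hnear : ∀ j ∈ Finset.Icc 1 n, |α + h| ≤ |α + j|)
    (hα : -(n : ℝ) - 1 / 2 ≤ α)
    (hhalf : |α + h| ≤ 1 / 2) :
    (∀ k : ℕ, 1 ≤ k → h + k ≤ n →
        (2 * (k : ℝ) - 1) / 2 ≤ |α + h + k| ∧ |α + h + k| ≤ (2 * (k : ℝ) + 1) / 2) ∧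
      (∀ k : ℕ, 1 ≤ k → k ≤ h - 1 →
        (2 * (k : ℝ) - 1) / 2 ≤ |α + h - k| ∧ |α + h - k| ≤ (2 * (k : ℝ) + 1) / 2) ∧
      (∏ k ∈ Finset.Icc 1 (h - 1), (2 * (k : ℝ) - 1) / 2) *
          (∏ k ∈ Finset.Icc 1 (n - h), (2 * (k : ℝ) - 1) / 2) ≤
        (∏ j ∈ Finset.Icc 1 n, |α + j|) / |α + h| ∧
      (∏ j ∈ Finset.Icc 1 n, |α + j|) / |α + h| ≤
        (∏ k ∈ Finset.Icc 1 (h - 1), (2 * (k : ℝ) + 1) / 2) *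
          (∏ k ∈ Finset.Icc 1 (n - h), (2 * (k : ℝ) + 1) / 2) := by
  obtain ⟨hh1, hh2⟩ := Finset.mem_Icc.mp hh
  have hne : α + h ≠ 0 := hS h hh
  have hpos : 0 < |α + h| := abs_pos.mpr hne
  obtain ⟨hb1, hb2⟩ := abs_le.mp hhalf
  -- pointwise bounds
  have bplus : ∀ k : ℕ, 1 ≤ k → h + k ≤ n →
      (2 * (k : ℝ) - 1) / 2 ≤ |α + h + k| ∧ |α + h + k| ≤ (2 * (k : ℝ) + 1) / 2 := by
    intro k hk1 _
    have hk' : (1 : ℝ) ≤ k := by exact_mod_cast hk1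
    rw [show α + h + k = (α + h) + k by ring, abs_of_nonneg (by linarith)]
    constructor <;> linarith
  have bminus : ∀ k : ℕ, 1 ≤ k → k ≤ h - 1 →
      (2 * (k : ℝ) - 1) / 2 ≤ |α + h - k| ∧ |α + h - k| ≤ (2 * (k : ℝ) + 1) / 2 := by
    intro k hk1 _
    have hk' : (1 : ℝ) ≤ k := by exact_mod_cast hk1
    rw [show α + h - k = (α + h) - k by ring, abs_of_nonpos (by linarith), neg_sub]
    constructor <;> linarith
  refine ⟨bplus, bminus, ?_⟩
  -- product structure
  have hsplit : (∏ j ∈ Finset.Icc 1 n, |α + j|)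
      = |α + h| * ∏ j ∈ (Finset.Icc 1 n).erase h, |α + j| :=
    (Finset.mul_prod_erase _ _ hh).symm
  have hset : (Finset.Icc 1 n).erase h = Finset.Icc 1 (h - 1) ∪ Finset.Icc (h + 1) n := by
    ext j
    simp only [Finset.mem_erase, Finset.mem_Icc, Finset.mem_union]
    omega
  have hdisj : Disjoint (Finset.Icc 1 (h - 1)) (Finset.Icc (h + 1) n) := by
    rw [Finset.disjoint_left]
    intro j hj hj'
    simp only [Finset.mem_Icc] at hj hj'
    omega
  have hA : (∏ j ∈ Finset.Icc 1 (h - 1), |α + j|)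
      = ∏ k ∈ Finset.Icc 1 (h - 1), |α + h - k| := by
    refine Finset.prod_nbij' (fun j => h - j) (fun k => h - k) ?_ ?_ ?_ ?_ ?_
    · intro j hj; simp only [Finset.mem_Icc] at hj ⊢; omega
    · intro k hk; simp only [Finset.mem_Icc] at hk ⊢; omega
    · intro j hj; simp only [Finset.mem_Icc] at hj; omega
    · intro k hk; simp only [Finset.mem_Icc] at hk; omega
    · intro j hj
      simp only [Finset.mem_Icc] at hj
      have : ((h - j : ℕ) : ℝ) = (h : ℝ) - j := by
        have : j ≤ h := by omega
        push_cast [this]; ring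
      rw [this]
      ring_nf
  have hB : (∏ j ∈ Finset.Icc (h + 1) n, |α + j|)
      = ∏ k ∈ Finset.Icc 1 (n - h), |α + h + k| := by
    refine Finset.prod_nbij' (fun j => j - h) (fun k => h + k) ?_ ?_ ?_ ?_ ?_
    · intro j hj; simp only [Finset.mem_Icc] at hj ⊢; omega
    · intro k hk; simp only [Finset.mem_Icc] at hk ⊢; omega
    · intro j hj; simp only [Finset.mem_Icc] at hj; omega
    · intro k hk; simp only [Finset.mem_Icc] at hk; omega
    · intro j hj
      simp only [Finset.mem_Icc] at hj
      have : ((j - h : ℕ) : ℝ) = (j : ℝ) - h := by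
        have : h ≤ j := by omega
        push_cast [this]; ring
      rw [this]
      ring_nf
  have hQ : (∏ j ∈ Finset.Icc 1 n, |α + j|) / |α + h|
      = (∏ k ∈ Finset.Icc 1 (h - 1), |α + h - k|) *
        (∏ k ∈ Finset.Icc 1 (n - h), |α + h + k|) := by
    rw [hsplit, hset, Finset.prod_union hdisj, hA, hB]
    exact mul_div_cancel_left₀ _ (ne_of_gt hpos)
  rw [hQ]
  have memA : ∀ k ∈ Finset.Icc 1 (h - 1), 1 ≤ k ∧ k ≤ h - 1 := by
    intro k hk; exact Finset.mem_Icc.mp hk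
  have memB : ∀ k ∈ Finset.Icc 1 (n - h), 1 ≤ k ∧ h + k ≤ n := by
    intro k hk; obtain ⟨h1, h2⟩ := Finset.mem_Icc.mp hk; exact ⟨h1, by omega⟩
  have lnn : ∀ k : ℕ, 1 ≤ k → (0 : ℝ) ≤ (2 * (k : ℝ) - 1) / 2 := by
    intro k hk
    have : (1 : ℝ) ≤ k := by exact_mod_cast hk
    linarith
  constructor
  · apply mul_le_mul
    · exact Finset.prod_le_prod (fun k hk => lnn k (memA k hk).1)
        (fun k hk => (bminus k (memA k hk).1 (memA k hk).2).1)
    · exact Finset.prod_le_prod (fun k hk => lnn k (memB k hk).1)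
        (fun k hk => (bplus k (memB k hk).1 (memB k hk).2).1)
    · exact Finset.prod_nonneg (fun k hk => lnn k (memB k hk).1)
    · exact Finset.prod_nonneg (fun k hk => abs_nonneg _)
  · apply mul_le_mul
    · exact Finset.prod_le_prod (fun k _ => abs_nonneg _)
        (fun k hk => (bminus k (memA k hk).1 (memA k hk).2).2)
    · exact Finset.prod_le_prod (fun k _ => abs_nonneg _)
        (fun k hk => (bplus k (memB k hk).1 (memB k hk).2).2)
    · exact Finset.prod_nonneg (fun k hk => abs_nonneg _)
    · exact Finset.prod_nonneg (fun k hk => by positivity)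
end

section
/- Let (α_n) satisfy α_n/n → −1, α_n ∉ 𝕊_n = {−n,…,−1}, and dist(α_n, 𝕊_n)^{1/n} → e^{−r} for some r ≥ 0. Then lim_{n→∞} |L_n^{(α_n)}(0)|^{1/n} = e^{−r}, where L_n^{(α)}(0) = (α+1)(α+2)⋯(α+n)/n!. -/
/-!
Write `x + j = e + (j - m)`, where `e = x + m` is the factor of least modulus and `d = |e|`.
Minimality gives `e ≤ 1/2` if `m > 1` and `e ≥ -1/2` if `m < n`, so the factor at distance
`k = |j - m| ≥ 1` from `m` satisfies `k - 1/2 ≤ |x + j| ≤ k + d`. Comparing with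
`(m - 1)! (n - m)!` and `n! = n (m - 1)! (n - m)! binom(n - 1, n - m)`, both bounds come down to
`∏_{k ≤ a} (1 + y/k) ≤ exp (4 √(y a))`, which follows from `1 + t ≤ exp (2 √t)` and
`∑_{k ≤ a} 1/√k ≤ 2 √a`. Since `d` and `n - m` are at most `2 |α_n + n| = o(n)`, the quotient
`|L_n^{(α_n)}(0)| / d_n` is `exp (o(n))`.
-/

open Finset Filter Real
open scoped Nat

lemma one_add_le_exp_two_mul_sqrt {y : ℝ} (hy : 0 ≤ y) : 1 + y ≤ exp (2 * √y) :=
  calc 1 + y ≤ (√y + 1) ^ 2 := by nlinarith [sq_sqrt hy, sqrt_nonneg y]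
    _ ≤ exp √y ^ 2 := by gcongr; exact add_one_le_exp _
    _ = exp (2 * √y) := by rw [← exp_nat_mul]; norm_num

lemma sum_Icc_inv_sqrt_le (a : ℕ) : ∑ i ∈ Icc 1 a, 1 / √(i : ℝ) ≤ 2 * √a := by
  induction a with
  | zero => simp
  | succ a ih =>
    rw [sum_Icc_succ_top (by omega)]
    have hs := sq_sqrt (Nat.cast_nonneg (α := ℝ) a)
    have hu := sq_sqrt (Nat.cast_nonneg (α := ℝ) (a + 1))
    have hu0 : 0 < √((a + 1 : ℕ) : ℝ) := sqrt_pos.2 (by positivity)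
    have : 1 / √((a + 1 : ℕ) : ℝ) ≤ 2 * √((a + 1 : ℕ) : ℝ) - 2 * √a := by
      rw [div_le_iff₀ hu0]
      push_cast at hu ⊢
      nlinarith [sq_nonneg (√((a : ℝ) + 1) - √a), sqrt_nonneg (a : ℝ)]
    linarith

lemma prod_Icc_add_le {x : ℝ} (hx : 0 ≤ x) (a : ℕ) :
    ∏ i ∈ Icc 1 a, ((i : ℝ) + x) ≤ a ! * exp (4 * √(x * a)) := by
  have hfactor : ∀ i ∈ Icc 1 a, (i : ℝ) + x ≤ i * exp (2 * √x * (1 / √(i : ℝ))) := by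
    intro i hi
    have hi0 : (0 : ℝ) < i := by exact_mod_cast (mem_Icc.1 hi).1
    calc (i : ℝ) + x = i * (1 + x / i) := by field_simp
      _ ≤ i * exp (2 * √(x / i)) := by
        gcongr; exact one_add_le_exp_two_mul_sqrt (by positivity)
      _ = i * exp (2 * √x * (1 / √(i : ℝ))) := by rw [sqrt_div' _ hi0.le]; ring_nf
  calc ∏ i ∈ Icc 1 a, ((i : ℝ) + x)
      ≤ ∏ i ∈ Icc 1 a, ((i : ℝ) * exp (2 * √x * (1 / √(i : ℝ)))) :=
        prod_le_prod (fun i hi => by positivity) hfactor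
    _ = a ! * exp (2 * √x * ∑ i ∈ Icc 1 a, 1 / √(i : ℝ)) := by
        rw [prod_mul_distrib, ← exp_sum, ← mul_sum, ← Nat.cast_prod, ← Ico_add_one_right_eq_Icc,
          prod_Ico_id_eq_factorial]
    _ ≤ a ! * exp (4 * √(x * a)) := by
        gcongr _ * exp ?_
        rw [sqrt_mul hx]
        nlinarith [sum_Icc_inv_sqrt_le a, sqrt_nonneg x]

lemma factorial_le_mul_prod_Icc_sub_half (a : ℕ) :
    (a ! : ℝ) ≤ (a + 1) * ∏ i ∈ Icc 1 a, ((i : ℝ) - 1 / 2) := by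
  induction a with
  | zero => simp
  | succ a ih =>
    rw [prod_Icc_succ_top (by omega), Nat.factorial_succ]
    have hP : 0 ≤ ∏ i ∈ Icc 1 a, ((i : ℝ) - 1 / 2) :=
      prod_nonneg fun i hi => by
        have : (1 : ℝ) ≤ i := by exact_mod_cast (mem_Icc.1 hi).1
        linarith
    push_cast
    nlinarith

lemma factorial_le_mul_prod_of_sub_half_le {a : ℕ} {g : ℕ → ℝ}
    (hg : ∀ i ∈ Icc 1 a, (i : ℝ) - 1 / 2 ≤ g i) :
    (a ! : ℝ) ≤ (a + 1) * ∏ i ∈ Icc 1 a, g i := by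
  refine (factorial_le_mul_prod_Icc_sub_half a).trans
    (mul_le_mul_of_nonneg_left (prod_le_prod (fun i hi => ?_) hg) (by positivity))
  have : (1 : ℝ) ≤ i := by exact_mod_cast (mem_Icc.1 hi).1
  linarith

lemma factorial_add_eq_mul_prod_Icc (a b : ℕ) :
    ((a + b)! : ℝ) = a ! * ∏ i ∈ Icc 1 b, ((i : ℝ) + a) := by
  induction b with
  | zero => simp
  | succ b ih =>
    rw [prod_Icc_succ_top (by omega), ← add_assoc, Nat.factorial_succ]
    push_cast
    rw [ih]
    ring

lemma factorial_le_mul_factorial_mul_factorial {m n : ℕ} (hm : m ∈ Icc 1 n) :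
    (n ! : ℝ) ≤ n * (m - 1)! * (n - m)! * exp (4 * √((n - m : ℕ) * n)) := by
  obtain ⟨hm1, hmn⟩ := mem_Icc.1 hm
  have hsplit : (n ! : ℝ) = n * (n - m)! * ∏ i ∈ Icc 1 (m - 1), ((i : ℝ) + (n - m : ℕ)) := by
    rw [← Nat.mul_factorial_pred (by omega), show n - 1 = (n - m) + (m - 1) by omega, Nat.cast_mul,
      factorial_add_eq_mul_prod_Icc, mul_assoc]
  have hprod : ∏ i ∈ Icc 1 (m - 1), ((i : ℝ) + (n - m : ℕ))
      ≤ (m - 1)! * exp (4 * √((n - m : ℕ) * n)) :=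
    calc ∏ i ∈ Icc 1 (m - 1), ((i : ℝ) + (n - m : ℕ))
        ≤ (m - 1)! * exp (4 * √((n - m : ℕ) * (m - 1 : ℕ))) := prod_Icc_add_le (by positivity) _
      _ ≤ (m - 1)! * exp (4 * √((n - m : ℕ) * n)) := by gcongr; omega
  rw [hsplit]
  calc (n : ℝ) * (n - m)! * ∏ i ∈ Icc 1 (m - 1), ((i : ℝ) + (n - m : ℕ))
      ≤ n * (n - m)! * ((m - 1)! * exp (4 * √((n - m : ℕ) * n))) := by gcongr
    _ = _ := by ring

lemma prod_Icc_eq_prod_sub_mul_mul_prod_add {M : Type*} [CommMonoid M] (f : ℕ → M) {m n : ℕ}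
    (hm : m ∈ Icc 1 n) :
    ∏ j ∈ Icc 1 n, f j =
      (∏ i ∈ Icc 1 (m - 1), f (m - i)) * f m * ∏ i ∈ Icc 1 (n - m), f (m + i) := by
  obtain ⟨hm1, hmn⟩ := mem_Icc.1 hm
  have hleft : ∏ j ∈ Ioc 0 m, f j = (∏ i ∈ Icc 1 (m - 1), f (m - i)) * f m := by
    obtain ⟨k, rfl⟩ : ∃ k, m = k + 1 := ⟨m - 1, by omega⟩
    rw [prod_Ioc_succ_top (by omega), Nat.add_sub_cancel]
    congr 1
    refine prod_nbij' (fun j => k + 1 - j) (fun i => k + 1 - i) ?_ ?_ ?_ ?_ ?_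
    all_goals intro j hj; simp only [mem_Icc, mem_Ioc] at hj ⊢
    all_goals try omega
    rw [show k + 1 - (k + 1 - j) = j by omega]
  have hright : ∏ j ∈ Ioc m n, f j = ∏ i ∈ Icc 1 (n - m), f (m + i) := by
    refine prod_nbij' (fun j => j - m) (fun i => m + i) ?_ ?_ ?_ ?_ ?_
    all_goals intro j hj; simp only [mem_Icc, mem_Ioc] at hj ⊢
    all_goals try omega
    rw [show m + (j - m) = j by omega]
  rw [← hleft, ← hright, prod_Ioc_consecutive _ (Nat.zero_le m) hmn, ← Icc_add_one_left_eq_Ioc,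
    zero_add]

section
variable (x : ℝ) {m n : ℕ}

lemma prod_Icc_abs_add_eq (hm : m ∈ Icc 1 n) :
    ∏ j ∈ Icc 1 n, |x + j| = (∏ i ∈ Icc 1 (m - 1), |(x + m) - i|) * |x + m| *
      ∏ i ∈ Icc 1 (n - m), |(x + m) + i| := by
  rw [prod_Icc_eq_prod_sub_mul_mul_prod_add (fun j => |x + (j : ℝ)|) hm]
  congr 2
  · refine prod_congr rfl fun i hi => ?_
    rw [Nat.cast_sub (by have := (mem_Icc.1 hi).2; omega)]
    ring_nf
  · ext i
    push_cast
    ring_nf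

lemma prod_Icc_abs_add_le (hm : m ∈ Icc 1 n) :
    ∏ j ∈ Icc 1 n, |x + j| ≤ |x + m| * n ! * exp (8 * √(|x + m| * n)) := by
  obtain ⟨hm1, hmn⟩ := mem_Icc.1 hm
  set d := |x + m|
  have hd : 0 ≤ d := abs_nonneg _
  have hleft : ∏ i ∈ Icc 1 (m - 1), |(x + m) - i| ≤ (m - 1)! * exp (4 * √(d * n)) :=
    calc ∏ i ∈ Icc 1 (m - 1), |(x + m) - i| ≤ ∏ i ∈ Icc 1 (m - 1), ((i : ℝ) + d) :=
          prod_le_prod (fun _ _ => abs_nonneg _) fun i _ => by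
            simpa [add_comm] using abs_sub (x + m) (i : ℝ)
      _ ≤ (m - 1)! * exp (4 * √(d * (m - 1 : ℕ))) := prod_Icc_add_le hd _
      _ ≤ (m - 1)! * exp (4 * √(d * n)) := by gcongr; omega
  have hright : ∏ i ∈ Icc 1 (n - m), |(x + m) + i| ≤ (n - m)! * exp (4 * √(d * n)) :=
    calc ∏ i ∈ Icc 1 (n - m), |(x + m) + i| ≤ ∏ i ∈ Icc 1 (n - m), ((i : ℝ) + d) :=
          prod_le_prod (fun _ _ => abs_nonneg _) fun i _ => by
            simpa [add_comm] using abs_add_le (x + m) (i : ℝ)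
      _ ≤ (n - m)! * exp (4 * √(d * (n - m : ℕ))) := prod_Icc_add_le hd _
      _ ≤ (n - m)! * exp (4 * √(d * n)) := by gcongr; omega
  have hfac : ((m - 1)! * (n - m)! : ℝ) ≤ n ! := by
    exact_mod_cast (Nat.le_of_dvd (Nat.factorial_pos _)
      (Nat.factorial_mul_factorial_dvd_factorial_add _ _)).trans (Nat.factorial_le (by omega))
  rw [prod_Icc_abs_add_eq x hm]
  calc (∏ i ∈ Icc 1 (m - 1), |(x + m) - i|) * d * ∏ i ∈ Icc 1 (n - m), |(x + m) + i|
      ≤ (m - 1)! * exp (4 * √(d * n)) * d * ((n - m)! * exp (4 * √(d * n))) := by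
        gcongr
    _ = d * ((m - 1)! * (n - m)!) * exp (8 * √(d * n)) := by
        rw [show 8 * √(d * n) = 4 * √(d * n) + 4 * √(d * n) by ring, exp_add]; ring
    _ ≤ d * n ! * exp (8 * √(d * n)) := by gcongr

lemma mul_factorial_le_prod_Icc_abs_add (hm : m ∈ Icc 1 n)
    (hmin : ∀ j ∈ Icc 1 n, |x + m| ≤ |x + j|) :
    |x + m| * n ! ≤ n ^ 3 * exp (4 * √((n - m : ℕ) * n)) * ∏ j ∈ Icc 1 n, |x + j| := by
  obtain ⟨hm1, hmn⟩ := mem_Icc.1 hm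
  have hL : ((m - 1)! : ℝ) ≤ ((m - 1 : ℕ) + 1) * ∏ i ∈ Icc 1 (m - 1), |(x + m) - i| := by
    refine factorial_le_mul_prod_of_sub_half_le fun i hi => ?_
    obtain ⟨hi1, him⟩ := mem_Icc.1 hi
    have h := sq_le_sq.2 (hmin (m - 1) (mem_Icc.2 ⟨by omega, by omega⟩))
    rw [Nat.cast_sub hm1, Nat.cast_one] at h
    rw [abs_sub_comm]
    nlinarith [le_abs_self ((i : ℝ) - (x + m))]
  have hR : ((n - m)! : ℝ) ≤ ((n - m : ℕ) + 1) * ∏ i ∈ Icc 1 (n - m), |(x + m) + i| := by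
    refine factorial_le_mul_prod_of_sub_half_le fun i hi => ?_
    obtain ⟨hi1, hin⟩ := mem_Icc.1 hi
    have h := sq_le_sq.2 (hmin (m + 1) (mem_Icc.2 ⟨by omega, by omega⟩))
    push_cast at h
    nlinarith [le_abs_self ((x + m) + i)]
  have hm' : ((m - 1 : ℕ) : ℝ) + 1 ≤ n := by
    rw [Nat.cast_sub hm1, Nat.cast_one, sub_add_cancel]; exact_mod_cast hmn
  have hnm' : ((n - m : ℕ) : ℝ) + 1 ≤ n := by
    rw [Nat.cast_sub hmn]; linarith [(Nat.one_le_cast (α := ℝ)).2 hm1]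
  rw [prod_Icc_abs_add_eq x hm]
  calc |x + m| * n ! ≤ |x + m| * (n * (m - 1)! * (n - m)! * exp (4 * √((n - m : ℕ) * n))) := by
        gcongr; exact factorial_le_mul_factorial_mul_factorial hm
    _ ≤ |x + m| * (n * (((m - 1 : ℕ) + 1) * ∏ i ∈ Icc 1 (m - 1), |(x + m) - i|) *
          (((n - m : ℕ) + 1) * ∏ i ∈ Icc 1 (n - m), |(x + m) + i|) *
          exp (4 * √((n - m : ℕ) * n))) := by
        gcongr
    _ ≤ |x + m| * (n * (n * ∏ i ∈ Icc 1 (m - 1), |(x + m) - i|) *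
          (n * ∏ i ∈ Icc 1 (n - m), |(x + m) + i|) * exp (4 * √((n - m : ℕ) * n))) := by
        gcongr
    _ = _ := by ring

lemma abs_log_prod_Icc_abs_add_div_le (hm : m ∈ Icc 1 n)
    (hmin : ∀ j ∈ Icc 1 n, |x + m| ≤ |x + j|) (hx : x + m ≠ 0) :
    |log ((∏ j ∈ Icc 1 n, |x + j|) / n ! / |x + m|)| ≤ 3 * log n + 8 * √(2 * |x + n| * n) := by
  obtain ⟨hm1, hmn⟩ := mem_Icc.1 hm
  have hn : (0 : ℝ) < n := by exact_mod_cast (show 0 < n by omega)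
  have hd : 0 < |x + m| := abs_pos.2 hx
  have hP : 0 < ∏ j ∈ Icc 1 n, |x + j| := prod_pos fun j hj => hd.trans_le (hmin j hj)
  have hdn : |x + m| ≤ |x + n| := hmin n (mem_Icc.2 ⟨by omega, le_rfl⟩)
  have hnm : ((n - m : ℕ) : ℝ) ≤ 2 * |x + n| := by
    rw [Nat.cast_sub hmn]
    linarith [le_abs_self (x + n), neg_abs_le (x + m)]
  have hsqrt_d : √(|x + m| * n) ≤ √(2 * |x + n| * n) := by gcongr; linarith
  have hsqrt_nm : √((n - m : ℕ) * n) ≤ √(2 * |x + n| * n) := by gcongr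
  have hupper := log_le_log hP (prod_Icc_abs_add_le x hm)
  have hlower := log_le_log (by positivity) (mul_factorial_le_prod_Icc_abs_add x hm hmin)
  rw [log_mul (by positivity) (by positivity), log_mul (by positivity) (by positivity),
    log_exp] at hupper
  rw [log_mul (by positivity) (by positivity), log_mul (by positivity) (by positivity),
    log_mul (by positivity) (by positivity), log_pow, log_exp, Nat.cast_ofNat] at hlower
  rw [log_div (by positivity) hd.ne', log_div hP.ne' (by positivity), abs_le]
  have hlog_n : 0 ≤ log n := log_nonneg (Nat.one_le_cast.2 (hm1.trans hmn))
  constructor <;> linarith [sqrt_nonneg (2 * |x + n| * n)]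

end

lemma tendsto_rpow_one_div_of_abs_log_le {u c : ℕ → ℝ}
    (hc : Tendsto (fun n : ℕ => c n / n) atTop (nhds 0))
    (hu : ∀ᶠ n in atTop, 0 < u n ∧ |log (u n)| ≤ c n) :
    Tendsto (fun n : ℕ => u n ^ ((1 : ℝ) / n)) atTop (nhds 1) := by
  have hlog : Tendsto (fun n : ℕ => log (u n) * (1 / n)) atTop (nhds 0) := by
    refine squeeze_zero_norm' ?_ hc
    filter_upwards [hu] with n ⟨_, hn⟩
    rw [norm_mul, Real.norm_eq_abs, norm_div, norm_one, Real.norm_natCast, ← div_eq_mul_one_div]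
    gcongr
  have hexp := (continuous_exp.tendsto 0).comp hlog
  rw [exp_zero] at hexp
  refine hexp.congr' ?_
  filter_upwards [hu] with n ⟨hn, _⟩
  exact (rpow_def_of_pos hn _).symm

lemma tendsto_log_add_sqrt_div {δ : ℕ → ℝ} (hδ : Tendsto (fun n : ℕ => δ n / n) atTop (nhds 0)) :
    Tendsto (fun n : ℕ => (3 * log n + 8 * √(2 * δ n * n)) / n) atTop (nhds 0) := by
  have hlog : Tendsto (fun n : ℕ => log n / n) atTop (nhds 0) :=
    isLittleO_log_id_atTop.tendsto_div_nhds_zero.comp tendsto_natCast_atTop_atTop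
  have hsqrt : Tendsto (fun n : ℕ => √(2 * (δ n / n))) atTop (nhds 0) := by
    have h2 := hδ.const_mul 2
    rw [mul_zero] at h2
    simpa only [sqrt_zero] using h2.sqrt
  have := (hlog.const_mul 3).add (hsqrt.const_mul 8)
  rw [mul_zero, mul_zero, add_zero] at this
  refine this.congr' ?_
  filter_upwards [eventually_gt_atTop 0] with n hn
  have hn' : (0 : ℝ) < n := by exact_mod_cast hn
  rw [add_div, mul_div_assoc, mul_div_assoc, ← sqrt_sq hn'.le, ← sqrt_div' _ (sq_nonneg _),
    sqrt_sq hn'.le]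
  congr 3
  field_simp

theorem laguerre_at_zero_root_limit_general (α : ℕ → ℝ) (r : ℝ) (d : ℕ → ℝ)
    (hS : ∀ n : ℕ, ∀ j ∈ Finset.Icc 1 n, α n + j ≠ 0)
    (hlim : Tendsto (fun n : ℕ => α n / n) atTop (nhds (-1)))
    (hd : ∀ n : ℕ, 1 ≤ n → IsLeast {x : ℝ | ∃ j ∈ Finset.Icc 1 n, x = |α n + j|} (d n))
    (hdist : Tendsto (fun n : ℕ => d n ^ ((1 : ℝ) / n)) atTop (nhds (Real.exp (-r)))) :
    Tendsto (fun n : ℕ =>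
        (|∏ j ∈ Finset.Icc 1 n, (α n + j)| / (Nat.factorial n)) ^ ((1 : ℝ) / n))
      atTop (nhds (Real.exp (-r))) := by
  have hδ : Tendsto (fun n : ℕ => |α n + n| / n) atTop (nhds 0) := by
    have h := (hlim.add_const 1).abs
    rw [neg_add_cancel, abs_zero] at h
    refine h.congr' ?_
    filter_upwards [eventually_gt_atTop 0] with n hn
    have hn' : (0 : ℝ) < n := by exact_mod_cast hn
    rw [div_add_one hn'.ne', abs_div, abs_of_pos hn']
  have hratio : Tendsto (fun n : ℕ => (|∏ j ∈ Icc 1 n, (α n + j)| / n ! / d n) ^ ((1 : ℝ) / n))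
      atTop (nhds 1) := by
    refine tendsto_rpow_one_div_of_abs_log_le (tendsto_log_add_sqrt_div hδ) ?_
    filter_upwards [eventually_ge_atTop 1] with n hn
    obtain ⟨⟨m, hm, hdm⟩, hmin⟩ := hd n hn
    have hmin' : ∀ j ∈ Icc 1 n, |α n + m| ≤ |α n + j| := fun j hj => hdm ▸ hmin ⟨j, hj, rfl⟩
    have hx := abs_pos.2 (hS n m hm)
    have hP := prod_pos fun j hj => hx.trans_le (hmin' j hj)
    rw [hdm, abs_prod]
    exact ⟨by positivity, abs_log_prod_Icc_abs_add_div_le (α n) hm hmin' (hS n m hm)⟩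
  have hlimit := hdist.mul hratio
  rw [mul_one] at hlimit
  refine hlimit.congr' ?_
  filter_upwards [eventually_ge_atTop 1] with n hn
  obtain ⟨⟨j, hj, hdj⟩, _⟩ := hd n hn
  have hd_pos : 0 < d n := hdj ▸ abs_pos.2 (hS n j hj)
  rw [← mul_rpow hd_pos.le (by positivity), mul_div_cancel₀ _ hd_pos.ne']

/-- If `α_n/n → −1`, `α_n ∉ 𝕊_n = {−n,…,−1}`, and `dist(α_n, 𝕊_n)^{1/n} → e^{−r}` for
some `r ≥ 0` (where `dist(α, 𝕊_n) = min_{1≤j≤n} |α + j|`), then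
`|L_n^{(α_n)}(0)|^{1/n} = (|∏_{j=1}^n (α_n+j)|/n!)^{1/n} → e^{−r}`. -/
theorem laguerre_at_zero_root_limit (α : ℕ → ℝ) (r : ℝ) (hr : 0 ≤ r) (d : ℕ → ℝ)
    (hS : ∀ n : ℕ, ∀ j ∈ Finset.Icc 1 n, α n + j ≠ 0)
    (hlim : Tendsto (fun n : ℕ => α n / n) atTop (nhds (-1)))
    (hd : ∀ n : ℕ, 1 ≤ n → IsLeast {x : ℝ | ∃ j ∈ Finset.Icc 1 n, x = |α n + j|} (d n))
    (hdist : Tendsto (fun n : ℕ => d n ^ ((1 : ℝ) / n)) atTop (nhds (Real.exp (-r)))) :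
    Tendsto (fun n : ℕ =>
        (|∏ j ∈ Finset.Icc 1 n, (α n + j)| / (Nat.factorial n)) ^ ((1 : ℝ) / n))
      atTop (nhds (Real.exp (-r))) :=
  laguerre_at_zero_root_limit_general α r d hS hlim hd hdist
end
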